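/- For any family of functions J_{i,j} indexed by a finite set and any fixed point x = (x_1,…,x_N), the infimum over controls of the min-max terminal cost decomposes: if J(y) = min_σ max_i J_{i,σ(i)}(y_i) and the control sets are independent across blocks i, then inf over joint controls α = (α_1,…,α_N) of J(γ(t;x,α)) equals min_σ max_i (inf over α_i of J_{i,σ(i)}(γ_i(t;x_i,α_i))), where γ(t;x,α) = (γ_1(t;x_1,α_1),…,γ_N(t;x_N,α_N)). -/

import Mathlib

open Finset

private lemma coe_sup'_aux {β} (s : Finset β) (h : s.Nonempty) (f : β → ℝ) :
    ((s.sup' h f : ℝ) : EReal) = s.sup' h (fun i => (f i : EReal)) :=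
  comp_sup'_eq_sup'_comp h _ (fun _ _ => EReal.coe_strictMono.monotone.map_max)

private lemma coe_inf'_aux {β} (s : Finset β) (h : s.Nonempty) (f : β → ℝ) :
    ((s.inf' h f : ℝ) : EReal) = s.inf' h (fun i => (f i : EReal)) :=
  apply_inf'_eq_inf'_comp h _ (fun _ _ => EReal.coe_strictMono.monotone.map_min)

private lemma iInf_inf'_swap {β ι} [Nonempty ι] (s : Finset β) (h : s.Nonempty)
    (F : β → ι → EReal) :
    (⨅ α : ι, s.inf' h (fun b => F b α)) = s.inf' h (fun b => ⨅ α, F b α) := by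
  apply le_antisymm
  · exact Finset.le_inf' h _ (fun b hb => le_iInf fun α =>
      le_trans (iInf_le _ α) (inf'_le _ hb))
  · exact le_iInf fun α => Finset.le_inf' h _
      (fun b hb => (Finset.inf'_le _ hb).trans (iInf_le _ α))

private lemma decouple_aux {N : ℕ} (h : (Finset.univ : Finset (Fin N)).Nonempty)
    (𝒜 : Fin N → Type*) [∀ i, Nonempty (𝒜 i)] (f : ∀ i, 𝒜 i → EReal) :
    (⨅ α : ∀ i, 𝒜 i, Finset.univ.sup' h (fun i => f i (α i))) =
      Finset.univ.sup' h (fun i => ⨅ a, f i a) := by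
  apply le_antisymm
  · by_contra hcon
    set c := ⨅ α : ∀ i, 𝒜 i, Finset.univ.sup' h (fun i => f i (α i)) with hc
    have hlt : Finset.univ.sup' h (fun i => ⨅ a, f i a) < c := not_le.mp hcon
    have h1 : ∀ i : Fin N, (⨅ a, f i a) < c := fun i =>
      lt_of_le_of_lt (Finset.le_sup' (fun i => ⨅ a, f i a) (mem_univ i)) hlt
    choose a ha using fun i => iInf_lt_iff.mp (h1 i)
    have : c ≤ Finset.univ.sup' h (fun i => f i (a i)) := iInf_le _ a
    exact absurd (lt_of_le_of_lt this ((Finset.sup'_lt_iff h).mpr (fun i _ => ha i)))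
      (lt_irrefl _)
  · exact le_iInf fun α => Finset.sup'_mono_fun (fun i _ => iInf_le _ (α i))

theorem stmt_11 (N : ℕ) (hN : 0 < N) (n : Fin N → ℕ)
    (𝒜 : Fin N → Type*) [∀ i, Nonempty (𝒜 i)]
    (t : ℝ)
    (x : ∀ i, EuclideanSpace ℝ (Fin (n i)))
    -- γ i xi αi : endpoint at time t of the trajectory of vehicle i under control αi from xi
    (γ : ∀ i : Fin N, EuclideanSpace ℝ (Fin (n i)) → 𝒜 i → EuclideanSpace ℝ (Fin (n i)))
    (J : ∀ i : Fin N, Fin N → EuclideanSpace ℝ (Fin (n i)) → ℝ) :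
    (⨅ α : ∀ i, 𝒜 i,
        (((Finset.univ : Finset (Equiv.Perm (Fin N))).inf' ⟨1, Finset.mem_univ 1⟩
          (fun σ => (Finset.univ : Finset (Fin N)).sup'
            (Finset.univ_nonempty_iff.mpr ⟨⟨0, hN⟩⟩)
            (fun i => J i (σ i) (γ i (x i) (α i)))) : ℝ) : EReal)) =
      (Finset.univ : Finset (Equiv.Perm (Fin N))).inf' ⟨1, Finset.mem_univ 1⟩
        (fun σ => (Finset.univ : Finset (Fin N)).sup'
          (Finset.univ_nonempty_iff.mpr ⟨⟨0, hN⟩⟩)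
          (fun i => ⨅ a : 𝒜 i, ((J i (σ i) (γ i (x i) a) : ℝ) : EReal))) := by
  have hne : (Finset.univ : Finset (Fin N)).Nonempty :=
    Finset.univ_nonempty_iff.mpr ⟨⟨0, hN⟩⟩
  have hne' : (Finset.univ : Finset (Equiv.Perm (Fin N))).Nonempty := ⟨1, Finset.mem_univ 1⟩
  change (⨅ α : ∀ i, 𝒜 i, (((Finset.univ : Finset (Equiv.Perm (Fin N))).inf' hne'
      (fun σ => (Finset.univ : Finset (Fin N)).sup' hne
        (fun i => J i (σ i) (γ i (x i) (α i)))) : ℝ) : EReal)) =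
    (Finset.univ : Finset (Equiv.Perm (Fin N))).inf' hne'
      (fun σ => (Finset.univ : Finset (Fin N)).sup' hne
        (fun i => ⨅ a : 𝒜 i, ((J i (σ i) (γ i (x i) a) : ℝ) : EReal)))
  simp_rw [coe_inf'_aux, coe_sup'_aux]
  rw [iInf_inf'_swap]
  exact Finset.inf'_congr _ rfl (fun σ _ => decouple_aux hne 𝒜
    (fun i a => ((J i (σ i) (γ i (x i) a) : ℝ) : EReal)))
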